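/- arXiv:1609.04182 — 2 statements merged into one kernel-verified Lean document; each statement's English description precedes it below -/
import Mathlib

section
/- Let T be a finite tree with at least one edge. For every k ≥ 1, the number of unordered pairs of vertices of T at distance k equals the number of unordered pairs of edges of T at edge-distance k−1; that is, d(T,k) = d_e(T,k−1). -/
open SimpleGraph Polynomial Finset

/-- Distance between vertices, as a function on unordered pairs. -/
noncomputable def sdist {V : Type*} (G : SimpleGraph V) (p : Sym2 V) : ℕ :=
  Sym2.lift ⟨G.dist, fun _ _ => SimpleGraph.dist_comm⟩ p

/-- The Hosoya polynomial `H(G,x) = Σ_{k≥0} d(G,k) x^k`, where `d(G,k)` counts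
unordered pairs of vertices at distance `k` (so `d(G,0) = |V(G)|`). -/
noncomputable def hosoyaPoly {V : Type*} [Fintype V] [DecidableEq V]
    (G : SimpleGraph V) : Polynomial ℝ :=
  ∑ p : Sym2 V, X ^ sdist G p

/-- The edge-Hosoya polynomial, summing over unordered pairs of edges with the
line-graph distance. -/
noncomputable def edgeHosoyaPoly {V : Type*} [Fintype V] [DecidableEq V]
    (G : SimpleGraph V) [DecidableRel G.Adj] : Polynomial ℝ :=
  ∑ p : Sym2 G.edgeSet, X ^ sdist G.lineGraph p

/-- The Wiener index: sum of distances over unordered pairs of vertices. -/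
noncomputable def wienerIndex {V : Type*} [Fintype V] [DecidableEq V]
    (G : SimpleGraph V) : ℕ :=
  ∑ p : Sym2 V, sdist G p

/-- The edge-Wiener index: sum of line-graph distances over unordered pairs of edges. -/
noncomputable def edgeWienerIndex {V : Type*} [Fintype V] [DecidableEq V]
    (G : SimpleGraph V) [DecidableRel G.Adj] : ℕ :=
  ∑ p : Sym2 G.edgeSet, sdist G.lineGraph p

/-- The hyper-Wiener index. -/
noncomputable def hyperWiener {V : Type*} [Fintype V] [DecidableEq V]
    (G : SimpleGraph V) : ℝ :=
  (1/2) * ∑ p : Sym2 V, (sdist G p : ℝ) + (1/2) * ∑ p : Sym2 V, (sdist G p : ℝ)^2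

/-- The edge-hyper-Wiener index. -/
noncomputable def edgeHyperWiener {V : Type*} [Fintype V] [DecidableEq V]
    (G : SimpleGraph V) [DecidableRel G.Adj] : ℝ :=
  (1/2) * ∑ p : Sym2 G.edgeSet, (sdist G.lineGraph p : ℝ) +
  (1/2) * ∑ p : Sym2 G.edgeSet, (sdist G.lineGraph p : ℝ)^2

/-!
Send a pair `{x, y}` of vertices at distance `k ≥ 1` to the first and the last edge of the
path from `x` to `y`. The edges along the path form a walk of length `k - 1` in the line graph,
and conversely a line-graph walk of length `m` from `e` to `f` keeps every endpoint of `e` within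
`m + 1` of every endpoint of `f`; so the two edges are at line-graph distance exactly `k - 1`.
The map is injective because `{x, y}` is the only pair of endpoints of the two edges at
distance `k`. It is surjective because the endpoints `x ∈ e`, `y ∈ f` at maximal distance are
joined by a path starting with `e` and ending with `f`: in a tree the endpoints of an edge are
never equidistant from a vertex.
-/

lemma sdist_mk {V : Type*} (G : SimpleGraph V) (x y : V) : sdist G s(x, y) = G.dist x y := rfl

namespace SimpleGraph

variable {V : Type*} {G : SimpleGraph V}

lemma eq_or_adj_of_mem_edge {e : Sym2 V} (he : e ∈ G.edgeSet) {u v : V} (hu : u ∈ e)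
    (hv : v ∈ e) : u = v ∨ G.Adj u v := by
  rcases eq_or_ne u v with h | h
  · exact .inl h
  · exact .inr (adj_iff_exists_edge.mpr ⟨h, e, he, hu, hv⟩)

lemma dist_le_one_of_mem_edge {e : Sym2 V} (he : e ∈ G.edgeSet) {u v : V} (hu : u ∈ e)
    (hv : v ∈ e) : G.dist u v ≤ 1 := by
  rcases eq_or_adj_of_mem_edge he hu hv with rfl | h
  · simp
  · exact (dist_eq_one_iff_adj.mpr h).le

lemma reachable_of_mem_edge {e : Sym2 V} (he : e ∈ G.edgeSet) {u v : V} (hu : u ∈ e)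
    (hv : v ∈ e) : G.Reachable u v :=
  (eq_or_adj_of_mem_edge he hu hv).elim (fun h ↦ h ▸ .refl u) Adj.reachable

lemma dist_le_length_add_one_of_lineGraph_walk {e f : G.edgeSet} (w : G.lineGraph.Walk e f)
    {u v : V} (hu : u ∈ (e : Sym2 V)) (hv : v ∈ (f : Sym2 V)) :
    G.dist u v ≤ w.length + 1 := by
  induction w generalizing u with
  | nil => exact dist_le_one_of_mem_edge (Subtype.prop _) hu hv
  | @cons e e' f h w ih =>
    obtain ⟨-, c, hce, hce'⟩ := lineGraph_adj_iff_exists.mp h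
    calc G.dist u v ≤ G.dist u c + G.dist c v :=
          (reachable_of_mem_edge e.prop hu hce).dist_triangle_left v
      _ ≤ 1 + (w.length + 1) := add_le_add (dist_le_one_of_mem_edge e.prop hu hce) (ih hce' hv)
      _ = (Walk.cons h w).length + 1 := by rw [Walk.length_cons]; ring

lemma dist_le_lineGraph_dist_add_one {e f : G.edgeSet} (h : G.lineGraph.Reachable e f)
    {u v : V} (hu : u ∈ (e : Sym2 V)) (hv : v ∈ (f : Sym2 V)) :
    G.dist u v ≤ G.lineGraph.dist e f + 1 := by
  obtain ⟨w, hw⟩ := h.exists_walk_length_eq_dist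
  exact hw ▸ dist_le_length_add_one_of_lineGraph_walk w hu hv

namespace Walk

/-- Consecutive edges of a walk are equal or adjacent in the line graph. -/
lemma exists_lineGraph_walk {x y : V} (p : G.Walk x y) (hp : ¬p.Nil) (e f : G.edgeSet)
    (he : (e : Sym2 V) = s(x, p.snd)) (hf : (f : Sym2 V) = s(p.penultimate, y)) :
    ∃ w : G.lineGraph.Walk e f, w.length + 1 ≤ p.length := by
  induction p generalizing e with
  | nil => exact absurd nil_nil hp
  | @cons x b y h q ih =>
    rw [snd_cons] at he
    by_cases hq : q.Nil
    · cases q with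
      | nil =>
        rw [penultimate_cons_nil] at hf
        exact ⟨nil.copy rfl (Subtype.ext (he.trans hf.symm)), by simp⟩
      | cons => exact absurd hq not_nil_cons
    rw [penultimate_cons_of_not_nil h q hq] at hf
    obtain ⟨w, hw⟩ := ih hq ⟨s(b, q.snd), G.mem_edgeSet.mpr (q.adj_snd hq)⟩ rfl hf
    by_cases he' : e = ⟨s(b, q.snd), G.mem_edgeSet.mpr (q.adj_snd hq)⟩
    · subst he'
      exact ⟨w, by rw [length_cons]; omega⟩
    · refine ⟨cons (lineGraph_adj_iff_exists.mpr ⟨he', b, by simp [he], by simp⟩) w, ?_⟩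
      simp only [length_cons]
      omega

lemma dist_snd_penultimate_le {x y : V} (p : G.Walk x y) (hp : 2 ≤ p.length) :
    G.dist p.snd p.penultimate ≤ p.length - 2 := by
  have h : G.dist p.snd p.tail.penultimate ≤ p.length - 1 - 1 := by
    simpa using dist_le p.tail.dropLast
  have hpen : p.tail.penultimate = p.penultimate := by
    simp only [penultimate, getVert_tail, length_tail]
    congr 1
    omega
  rw [hpen] at h
  omega

variable {x y : V} {p : G.Walk x y}

lemma lineGraph_dist_add_one_of_length_eq_dist (hp : p.length = G.dist x y) (hxy : x ≠ y)
    {e f : G.edgeSet} (he : (e : Sym2 V) = s(x, p.snd))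
    (hf : (f : Sym2 V) = s(p.penultimate, y)) :
    G.lineGraph.dist e f + 1 = G.dist x y := by
  obtain ⟨w, hw⟩ := p.exists_lineGraph_walk (not_nil_of_ne hxy) e f he hf
  have hlower :=
    dist_le_lineGraph_dist_add_one ⟨w⟩ (u := x) (v := y) (by simp [he]) (by simp [hf])
  have hupper := dist_le w
  omega

/-- The other three choices of `u` and `v` are joined by proper subwalks of the shortest
walk `p`, except when `p` is a single edge. -/
lemma mk_eq_of_dist_le (hp : p.length = G.dist x y) (hxy : x ≠ y) {u v : V}
    (hu : u ∈ s(x, p.snd)) (hv : v ∈ s(p.penultimate, y)) (h : G.dist x y ≤ G.dist u v) :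
    s(u, v) = s(x, y) := by
  have hpos : 0 < p.length := by
    rw [← not_nil_iff_lt_length]; exact not_nil_of_ne hxy
  rw [Sym2.mem_iff] at hu hv
  rcases hu with hu | hu <;> rcases hv with hv | hv <;> subst u v
  · have := dist_le p.dropLast
    rw [length_dropLast] at this
    omega
  · rfl
  · rcases (by omega : p.length = 1 ∨ 2 ≤ p.length) with h1 | h2
    · have hsnd : p.snd = y := by simp [snd, ← h1]
      have hpen : p.penultimate = x := by simp [penultimate, h1]
      rw [hsnd, hpen, Sym2.eq_swap]
    · have := p.dist_snd_penultimate_le h2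
      omega
  · have := dist_le p.tail
    rw [length_tail] at this
    omega

end Walk

namespace IsTree

variable {T : SimpleGraph V} (hT : T.IsTree) {x y : V}

noncomputable def path (x y : V) : T.Walk x y :=
  (hT.connected.exists_path_of_dist x y).choose

lemma isPath_path (x y : V) : (hT.path x y).IsPath :=
  (hT.connected.exists_path_of_dist x y).choose_spec.1

lemma length_path (x y : V) : (hT.path x y).length = T.dist x y :=
  (hT.connected.exists_path_of_dist x y).choose_spec.2

lemma eq_path_of_isPath {p : T.Walk x y} (hp : p.IsPath) : p = hT.path x y :=
  (hT.existsUnique_path x y).unique hp (hT.isPath_path x y)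

lemma reverse_path (x y : V) : (hT.path x y).reverse = hT.path y x :=
  hT.eq_path_of_isPath (hT.isPath_path x y).reverse

lemma snd_path_of_adj {w : V} (h : T.Adj x w) (hd : T.dist w y + 1 = T.dist x y) :
    (hT.path x y).snd = w := by
  have hlen : (Walk.cons h (hT.path w y)).length = T.dist x y := by
    rw [Walk.length_cons, length_path, hd]
  rw [← hT.eq_path_of_isPath (Walk.isPath_of_length_eq_dist _ hlen), Walk.snd_cons]

variable [DecidableEq V]

/-- `e₀` is a junk value for `x = y`. -/
noncomputable def firstEdge (e₀ : T.edgeSet) (x y : V) : T.edgeSet :=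
  if h : x = y then e₀
  else ⟨s(x, (hT.path x y).snd), T.mem_edgeSet.mpr (Walk.adj_snd (Walk.not_nil_of_ne h))⟩

variable (e₀ : T.edgeSet)

lemma coe_firstEdge (hxy : x ≠ y) :
    (hT.firstEdge e₀ x y : Sym2 V) = s(x, (hT.path x y).snd) := by
  simp [firstEdge, hxy]

lemma coe_firstEdge_swap (hxy : x ≠ y) :
    (hT.firstEdge e₀ y x : Sym2 V) = s((hT.path x y).penultimate, y) := by
  rw [coe_firstEdge _ _ hxy.symm, ← reverse_path, Walk.snd_reverse, Sym2.eq_swap]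

lemma mem_firstEdge (hxy : x ≠ y) : x ∈ (hT.firstEdge e₀ x y : Sym2 V) := by
  simp [coe_firstEdge _ _ hxy]

lemma lineGraph_dist_firstEdge_add_one (hxy : x ≠ y) :
    T.lineGraph.dist (hT.firstEdge e₀ x y) (hT.firstEdge e₀ y x) + 1 = T.dist x y :=
  Walk.lineGraph_dist_add_one_of_length_eq_dist (hT.length_path x y) hxy
    (hT.coe_firstEdge e₀ hxy) (hT.coe_firstEdge_swap e₀ hxy)

lemma mk_eq_of_mem_firstEdge (hxy : x ≠ y) {u v : V}
    (hu : u ∈ (hT.firstEdge e₀ x y : Sym2 V)) (hv : v ∈ (hT.firstEdge e₀ y x : Sym2 V))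
    (h : T.dist x y ≤ T.dist u v) : s(u, v) = s(x, y) := by
  rw [coe_firstEdge _ _ hxy] at hu
  rw [coe_firstEdge_swap _ _ hxy] at hv
  exact Walk.mk_eq_of_dist_le (hT.length_path x y) hxy hu hv h

/-- In a tree the two endpoints of an edge are never equidistant from `y`. -/
lemma firstEdge_eq_of_forall_dist_le {e : T.edgeSet} (hx : x ∈ (e : Sym2 V))
    (hmax : ∀ u ∈ (e : Sym2 V), T.dist u y ≤ T.dist x y) :
    x ≠ y ∧ hT.firstEdge e₀ x y = e := by
  set w := Sym2.Mem.other hx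
  have hxw : s(x, w) = e := Sym2.other_spec hx
  have hadj : T.Adj x w := T.mem_edgeSet.mp (hxw ▸ e.prop)
  have hd : T.dist w y + 1 = T.dist x y := by
    have := hmax w (Sym2.other_mem hx)
    rcases hT.dist_eq_dist_add_one_of_adj y hadj with h | h <;>
      rw [dist_comm (u := y), dist_comm (u := y)] at h <;> omega
  have hxy : x ≠ y := by
    rintro rfl
    simp at hd
  exact ⟨hxy, Subtype.ext (by rw [coe_firstEdge _ _ hxy, hT.snd_path_of_adj hadj hd, hxw])⟩

lemma exists_firstEdge_eq (e f : T.edgeSet) :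
    ∃ x y, x ≠ y ∧ hT.firstEdge e₀ x y = e ∧ hT.firstEdge e₀ y x = f := by
  obtain ⟨⟨x, y⟩, hmem, hmax⟩ :=
    ((e : Sym2 V).toFinset ×ˢ (f : Sym2 V).toFinset).exists_max_image (fun p ↦ T.dist p.1 p.2)
      ⟨((e : Sym2 V).out.1, (f : Sym2 V).out.1), by simp [Sym2.out_fst_mem]⟩
  simp only [mem_product, Sym2.mem_toFinset] at hmem
  obtain ⟨hxy, hx⟩ := hT.firstEdge_eq_of_forall_dist_le e₀ hmem.1
    fun u hu ↦ hmax (u, y) (by simp [hu, hmem.2])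
  obtain ⟨-, hy⟩ := hT.firstEdge_eq_of_forall_dist_le e₀ (y := x) hmem.2
    fun v hv ↦ by simpa [dist_comm] using hmax (x, v) (by simp [hv, hmem.1])
  exact ⟨x, y, hxy, hx, hy⟩

noncomputable def firstEdgePair : Sym2 V → Sym2 T.edgeSet :=
  Sym2.lift
    ⟨fun x y ↦ s(hT.firstEdge e₀ x y, hT.firstEdge e₀ y x), fun _ _ ↦ Sym2.eq_swap⟩

lemma sdist_firstEdgePair {p : Sym2 V} (hp : sdist T p ≠ 0) :
    sdist T.lineGraph (hT.firstEdgePair e₀ p) + 1 = sdist T p := by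
  induction p using Sym2.ind with
  | _ x y =>
    have hxy : x ≠ y := by rintro rfl; simp [sdist_mk] at hp
    exact hT.lineGraph_dist_firstEdge_add_one e₀ hxy

lemma eq_of_firstEdgePair_eq {p q : Sym2 V} (hp : sdist T p ≠ 0)
    (hpq : sdist T p = sdist T q) (h : hT.firstEdgePair e₀ p = hT.firstEdgePair e₀ q) :
    p = q := by
  induction p using Sym2.ind with
  | _ x y =>
  induction q using Sym2.ind with
  | _ x' y' =>
  simp only [sdist_mk] at hp hpq
  have hxy : x ≠ y := by rintro rfl; simp at hp
  have hxy' : x' ≠ y' := by rintro rfl; simp [hpq] at hp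
  rcases Sym2.eq_iff.mp h with ⟨h₁, h₂⟩ | ⟨h₁, h₂⟩
  · exact (hT.mk_eq_of_mem_firstEdge e₀ hxy (h₁ ▸ hT.mem_firstEdge e₀ hxy')
      (h₂ ▸ hT.mem_firstEdge e₀ hxy'.symm) hpq.le).symm
  · rw [Sym2.eq_swap (a := x')]
    exact (hT.mk_eq_of_mem_firstEdge e₀ hxy (h₁ ▸ hT.mem_firstEdge e₀ hxy'.symm)
      (h₂ ▸ hT.mem_firstEdge e₀ hxy') (by rw [hpq, dist_comm])).symm

lemma exists_firstEdgePair_eq (q : Sym2 T.edgeSet) :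
    ∃ p, sdist T p ≠ 0 ∧ hT.firstEdgePair e₀ p = q := by
  induction q using Sym2.ind with
  | _ e f =>
    obtain ⟨x, y, hxy, hx, hy⟩ := hT.exists_firstEdge_eq e₀ e f
    refine ⟨s(x, y), ?_, ?_⟩
    · rw [sdist_mk]; exact (hT.connected.pos_dist_of_ne hxy).ne'
    · simp only [firstEdgePair, Sym2.lift_mk, hx, hy]

end IsTree

end SimpleGraph

/-- In a finite tree with at least one edge, for every `k ≥ 1` the
number of unordered pairs of vertices at distance `k` equals the number of
unordered pairs of edges at line-graph distance `k - 1`. -/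
theorem stmt1 {V : Type*} [Fintype V] [DecidableEq V] (T : SimpleGraph V)
    [DecidableRel T.Adj] (hT : T.IsTree) (he : T.edgeSet.Nonempty)
    (k : ℕ) (hk : 1 ≤ k) :
    (univ.filter (fun p : Sym2 V => sdist T p = k)).card =
    (univ.filter (fun q : Sym2 T.edgeSet => sdist T.lineGraph q = k - 1)).card := by
  set e₀ : T.edgeSet := ⟨he.some, he.some_mem⟩
  apply Finset.card_bij (fun p _ ↦ hT.firstEdgePair e₀ p)
  · intro p hp
    simp only [mem_filter, mem_univ, true_and] at hp ⊢
    have := hT.sdist_firstEdgePair e₀ (p := p) (by omega)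
    omega
  · intro p hp q hq hpq
    simp only [mem_filter, mem_univ, true_and] at hp hq
    exact hT.eq_of_firstEdgePair_eq e₀ (by omega) (hp.trans hq.symm) hpq
  · intro q hq
    simp only [mem_filter, mem_univ, true_and] at hq
    obtain ⟨p, hp, rfl⟩ := hT.exists_firstEdgePair_eq e₀ q
    have := hT.sdist_firstEdgePair e₀ hp
    exact ⟨p, by simp only [mem_filter, mem_univ, true_and]; omega, rfl⟩
end

section
/- Let T be a finite tree with n vertices. Then the edge-Wiener index of T equals the Wiener index minus the number of unordered pairs of vertices: W_e(T) = W(T) − n(n−1)/2. -/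
/-!
In a tree, the line-graph distance of two edges `e`, `f` is one less than the largest distance
between an endpoint of `e` and an endpoint of `f`. Such a farthest pair of endpoints `u ∈ e`,
`v ∈ f` determines the edges: `e` is the unique edge at `u` leading towards `v`, and vice versa.
A tree on `n` vertices has `n - 1` edges, so there are `n(n-1)/2` unordered pairs of edges
(repetitions allowed), exactly as many as pairs of distinct vertices. Hence the farthest-pair map
is a bijection onto the pairs of distinct vertices, and summing `d(u, v) = d_L(e, f) + 1` over it
gives `W(T) = W_e(T) + n(n-1)/2`.
-/

open SimpleGraph Polynomial Finset

namespace SimpleGraph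

variable {V : Type*} {G : SimpleGraph V} {u v x y : V}

lemma exists_adj_eq_mk_of_mem {e : G.edgeSet} (hu : u ∈ (e : Sym2 V)) :
    ∃ x, G.Adj u x ∧ (e : Sym2 V) = s(u, x) :=
  ⟨Sym2.Mem.other hu, by rw [← mem_edgeSet, Sym2.other_spec]; exact e.2, (Sym2.other_spec hu).symm⟩

lemma edist_le_one_of_mem_edgeSet {e : Sym2 V} (he : e ∈ G.edgeSet) (hx : x ∈ e) (hy : y ∈ e) :
    G.edist x y ≤ 1 := by
  rw [edist_le_one_iff_adj_or_eq]
  by_cases hxy : x = y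
  · exact Or.inr hxy
  · exact Or.inl (adj_iff_exists_edge.mpr ⟨hxy, e, he, hx, hy⟩)

lemma lineGraph_edist_le_one {e f : G.edgeSet} (he : x ∈ (e : Sym2 V)) (hf : x ∈ (f : Sym2 V)) :
    G.lineGraph.edist e f ≤ 1 := by
  rw [edist_le_one_iff_adj_or_eq, lineGraph_adj_iff_exists]
  by_cases hef : e = f
  · exact Or.inr hef
  · exact Or.inl ⟨hef, x, he, hf⟩

lemma edist_le_lineGraph_walk_length_add_one {e f : G.edgeSet} (w : G.lineGraph.Walk e f)
    (hx : x ∈ (e : Sym2 V)) (hy : y ∈ (f : Sym2 V)) : G.edist x y ≤ w.length + 1 := by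
  induction w generalizing x with
  | nil => simpa using edist_le_one_of_mem_edgeSet (Subtype.prop _) hx hy
  | cons h w ih =>
    obtain ⟨-, z, hze, hzg⟩ := lineGraph_adj_iff_exists.mp h
    calc G.edist x y ≤ G.edist x z + G.edist z y := G.edist_triangle
      _ ≤ 1 + (w.length + 1) :=
        add_le_add (edist_le_one_of_mem_edgeSet (Subtype.prop _) hx hze) (ih hzg hy)
      _ = (w.cons h).length + 1 := by push_cast [Walk.length_cons]; ring

lemma edist_le_lineGraph_edist_add_one {e f : G.edgeSet} (hx : x ∈ (e : Sym2 V))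
    (hy : y ∈ (f : Sym2 V)) : G.edist x y ≤ G.lineGraph.edist e f + 1 := by
  by_cases h : G.lineGraph.Reachable e f
  · obtain ⟨w, hw⟩ := h.exists_walk_length_eq_edist
    rw [← hw]
    exact edist_le_lineGraph_walk_length_add_one w hx hy
  · simp [edist_eq_top_of_not_reachable h]

lemma lineGraph_edist_le_walk_length_add_one {e f : G.edgeSet} (p : G.Walk x y)
    (hx : x ∈ (e : Sym2 V)) (hy : y ∈ (f : Sym2 V)) : G.lineGraph.edist e f ≤ p.length + 1 := by
  induction p generalizing e with
  | nil => simpa using lineGraph_edist_le_one hx hy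
  | @cons x z y hxz p ih =>
    let g : G.edgeSet := ⟨s(x, z), hxz⟩
    calc G.lineGraph.edist e f ≤ G.lineGraph.edist e g + G.lineGraph.edist g f :=
          G.lineGraph.edist_triangle
      _ ≤ 1 + (p.length + 1) :=
        add_le_add (lineGraph_edist_le_one hx (Sym2.mem_mk_left x z))
          (ih (Sym2.mem_mk_right x z) hy)
      _ = (p.cons hxz).length + 1 := by push_cast [Walk.length_cons]; ring

lemma lineGraph_edist_le_edist_add_one {e f : G.edgeSet} (hx : x ∈ (e : Sym2 V))
    (hy : y ∈ (f : Sym2 V)) : G.lineGraph.edist e f ≤ G.edist x y + 1 := by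
  by_cases h : G.Reachable x y
  · obtain ⟨p, hp⟩ := h.exists_walk_length_eq_edist
    rw [← hp]
    exact lineGraph_edist_le_walk_length_add_one p hx hy
  · simp [edist_eq_top_of_not_reachable h]

lemma exists_adj_dist_add_one_eq (h : G.dist u v ≠ 0) :
    ∃ w, G.Adj u w ∧ G.dist w v + 1 = G.dist u v := by
  obtain ⟨p, hp⟩ := exists_walk_of_dist_ne_zero h
  cases p with
  | nil => simp at h
  | @cons _ w _ huw q =>
    refine ⟨w, huw, ?_⟩
    have hle := G.dist_le q
    have htri := huw.reachable.dist_triangle_left v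
    rw [dist_eq_one_iff_adj.mpr huw] at htri
    rw [Walk.length_cons] at hp
    omega

lemma exists_isPath_snd_eq_of_adj_of_dist_lt (hux : G.Adj u x) (hx : G.dist x v < G.dist u v) :
    ∃ p : G.Walk u v, p.IsPath ∧ p.snd = x := by
  classical
  have hreach : G.Reachable x v :=
    hux.reachable.symm.trans (Reachable.of_dist_ne_zero (by omega))
  obtain ⟨q, hq, hql⟩ := hreach.exists_path_of_dist
  have hu : u ∉ q.support := fun hu => by
    have := (G.dist_le (q.dropUntil u hu)).trans (q.length_dropUntil_le_length hu)
    omega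
  exact ⟨q.cons hux, hq.cons hu, Walk.snd_cons q hux⟩

lemma IsAcyclic.eq_of_adj_of_dist_lt (hG : G.IsAcyclic) (hux : G.Adj u x) (huy : G.Adj u y)
    (hx : G.dist x v < G.dist u v) (hy : G.dist y v < G.dist u v) : x = y := by
  obtain ⟨p, hp, rfl⟩ := exists_isPath_snd_eq_of_adj_of_dist_lt hux hx
  obtain ⟨q, hq, rfl⟩ := exists_isPath_snd_eq_of_adj_of_dist_lt huy hy
  rw [Subtype.mk.inj ((hG.subsingleton_path u v).elim ⟨p, hp⟩ ⟨q, hq⟩)]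

def IsFarthestPair (G : SimpleGraph V) (e f : G.edgeSet) (u v : V) : Prop :=
  u ∈ (e : Sym2 V) ∧ v ∈ (f : Sym2 V) ∧
    ∀ x ∈ (e : Sym2 V), ∀ y ∈ (f : Sym2 V), G.dist x y ≤ G.dist u v

lemma exists_isFarthestPair (e f : G.edgeSet) : ∃ u v, G.IsFarthestPair e f u v := by
  classical
  obtain ⟨e, he⟩ := e
  obtain ⟨f, hf⟩ := f
  induction e using Sym2.ind with | _ a b =>
  induction f using Sym2.ind with | _ c d =>
  obtain ⟨⟨u, v⟩, huv, hmax⟩ := ({a, b} ×ˢ {c, d} : Finset (V × V)).exists_max_image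
    (fun p => G.dist p.1 p.2) ⟨(a, c), by simp⟩
  simp only [Finset.mem_product, Finset.mem_insert, Finset.mem_singleton] at huv hmax
  refine ⟨u, v, by simp [huv.1], by simp [huv.2], fun x hx y hy => hmax (x, y) ?_⟩
  simp only [Sym2.mem_iff] at hx hy
  exact ⟨hx, hy⟩

lemma IsFarthestPair.symm {e f : G.edgeSet} (h : G.IsFarthestPair e f u v) :
    G.IsFarthestPair f e v u :=
  ⟨h.2.1, h.1, fun x hx y hy => by rw [dist_comm, G.dist_comm (u := v)]; exact h.2.2 y hy x hx⟩

variable {T : SimpleGraph V} {e f : T.edgeSet}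

lemma IsFarthestPair.dist_add_one (hT : T.IsTree) (h : T.IsFarthestPair e f u v)
    (hux : T.Adj u x) (hx : x ∈ (e : Sym2 V)) : T.dist x v + 1 = T.dist u v := by
  have hle := h.2.2 x hx v h.2.1
  have := hT.dist_eq_dist_add_one_of_adj v hux
  rw [dist_comm (u := v) (v := u), dist_comm (u := v) (v := x)] at this
  omega

lemma IsFarthestPair.eq_of_fst (hT : T.IsTree) {e' f' : T.edgeSet}
    (h : T.IsFarthestPair e f u v) (h' : T.IsFarthestPair e' f' u v) : e = e' := by
  obtain ⟨x, hux, he⟩ := exists_adj_eq_mk_of_mem h.1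
  obtain ⟨x', hux', he'⟩ := exists_adj_eq_mk_of_mem h'.1
  have hx := h.dist_add_one hT hux (he ▸ Sym2.mem_mk_right u x)
  have hx' := h'.dist_add_one hT hux' (he' ▸ Sym2.mem_mk_right u x')
  obtain rfl : x = x' := hT.isAcyclic.eq_of_adj_of_dist_lt (v := v) hux hux' (by omega) (by omega)
  exact Subtype.ext (he.trans he'.symm)

lemma IsFarthestPair.dist_add_two (hT : T.IsTree) (h : T.IsFarthestPair e f u v) (hef : e ≠ f)
    {u' v' : V} (huu' : T.Adj u u') (he : (e : Sym2 V) = s(u, u')) (hvv' : T.Adj v v')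
    (hf : (f : Sym2 V) = s(v, v')) : T.dist u' v' + 2 = T.dist u v := by
  have hu' : T.dist u' v + 1 = T.dist u v := h.dist_add_one hT huu' (he ▸ Sym2.mem_mk_right u u')
  have hv' : T.dist v' u + 1 = T.dist u v := by
    rw [dist_comm (u := u)]; exact h.symm.dist_add_one hT hvv' (hf ▸ Sym2.mem_mk_right v v')
  have htwo : 2 ≤ T.dist u v := by
    by_contra! hlt
    obtain rfl : u' = v := (hT.connected u' v).dist_eq_zero_iff.mp (by omega)
    obtain rfl : v' = u := (hT.connected v' u).dist_eq_zero_iff.mp (by omega)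
    exact hef (Subtype.ext (he.trans (Sym2.eq_swap.trans hf.symm)))
  have := T.dist_comm (u := u') (v := v)
  have := T.dist_comm (u := u') (v := v')
  have := T.dist_comm (u := u) (v := v)
  rcases hT.dist_eq_dist_add_one_of_adj u' hvv' with hvv'u' | hvv'u'
  · omega
  -- Otherwise `v'` would have two neighbours closer to `u'`: `v`, and the next vertex towards `u`.
  exfalso
  obtain ⟨w, hv'w, hw⟩ := exists_adj_dist_add_one_eq (G := T) (u := v') (v := u) (by omega)
  have hwu' : T.dist w u' ≤ T.dist w u + 1 := by
    have := hT.connected.dist_triangle (u := w) (v := u) (w := u')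
    rwa [dist_eq_one_iff_adj.mpr huu'] at this
  obtain rfl : v = w :=
    hT.isAcyclic.eq_of_adj_of_dist_lt (v := u') hvv'.symm hv'w (by omega) (by omega)
  omega

lemma IsFarthestPair.dist_eq_lineGraph_dist_add_one (hT : T.IsTree)
    (h : T.IsFarthestPair e f u v) : T.dist u v = T.lineGraph.dist e f + 1 := by
  obtain ⟨u', huu', he⟩ := exists_adj_eq_mk_of_mem h.1
  obtain ⟨v', hvv', hf⟩ := exists_adj_eq_mk_of_mem h.2.1
  have hedist (a b : V) : T.edist a b = T.dist a b := ((hT.connected a b).coe_dist_eq_edist).symm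
  have hupper : T.lineGraph.edist e f + 1 ≤ T.dist u v := by
    by_cases hef : e = f
    · have := h.dist_add_one hT huu' (he ▸ Sym2.mem_mk_right u u')
      rw [hef, edist_self, zero_add]
      exact_mod_cast (by omega : 1 ≤ T.dist u v)
    · calc T.lineGraph.edist e f + 1 ≤ T.edist u' v' + 1 + 1 := by
            gcongr
            exact lineGraph_edist_le_edist_add_one (he ▸ Sym2.mem_mk_right u u')
              (hf ▸ Sym2.mem_mk_right v v')
        _ = T.dist u v := by
            rw [hedist, ← h.dist_add_two hT hef huu' he hvv' hf]; push_cast; ring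
  have hreach : T.lineGraph.Reachable e f :=
    reachable_of_edist_ne_top (ne_top_of_le_ne_top (by simp) (le_trans le_self_add hupper))
  have hlower := edist_le_lineGraph_edist_add_one h.1 h.2.1
  rw [← hreach.coe_dist_eq_edist] at hlower hupper
  rw [hedist] at hlower
  exact_mod_cast le_antisymm hlower hupper

noncomputable def farthestPair (G : SimpleGraph V) (p : Sym2 G.edgeSet) : Sym2 V :=
  s((G.exists_isFarthestPair p.out.1 p.out.2).choose,
    (G.exists_isFarthestPair p.out.1 p.out.2).choose_spec.choose)

lemma exists_isFarthestPair_farthestPair (p : Sym2 G.edgeSet) :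
    ∃ e f u v, p = s(e, f) ∧ G.farthestPair p = s(u, v) ∧ G.IsFarthestPair e f u v :=
  ⟨_, _, _, _, (Quot.out_eq p).symm, rfl,
    (G.exists_isFarthestPair p.out.1 p.out.2).choose_spec.choose_spec⟩

lemma sdist_farthestPair (hT : T.IsTree) (p : Sym2 T.edgeSet) :
    sdist T (T.farthestPair p) = sdist T.lineGraph p + 1 := by
  obtain ⟨e, f, u, v, rfl, hp, h⟩ := exists_isFarthestPair_farthestPair p
  rw [hp]
  exact h.dist_eq_lineGraph_dist_add_one hT

lemma farthestPair_injective (hT : T.IsTree) : Function.Injective T.farthestPair := by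
  intro p p' hpp'
  obtain ⟨e, f, u, v, rfl, hp, h⟩ := exists_isFarthestPair_farthestPair p
  obtain ⟨e', f', u', v', rfl, hp', h'⟩ := exists_isFarthestPair_farthestPair p'
  rw [hp, hp'] at hpp'
  rcases Sym2.eq_iff.mp hpp' with ⟨rfl, rfl⟩ | ⟨rfl, rfl⟩
  · rw [h.eq_of_fst hT h', h.symm.eq_of_fst hT h'.symm]
  · rw [h.eq_of_fst hT h'.symm, h.symm.eq_of_fst hT h', Sym2.eq_swap]

lemma sdist_eq_zero_of_isDiag {q : Sym2 V} (hq : q.IsDiag) : sdist G q = 0 := by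
  induction q using Sym2.ind with | _ a b =>
  obtain rfl : a = b := Sym2.mk_isDiag_iff.mp hq
  exact dist_self

variable [Fintype V] [DecidableRel T.Adj]

lemma IsTree.card_sym2_edgeSet (hT : T.IsTree) :
    Fintype.card (Sym2 T.edgeSet) = (Fintype.card V).choose 2 := by
  rw [Sym2.card, ← edgeFinset_card, hT.card_edgeFinset]

variable [DecidableEq V]

lemma IsTree.image_farthestPair (hT : T.IsTree) :
    univ.image T.farthestPair = univ.filter (fun q : Sym2 V => ¬q.IsDiag) := by
  refine eq_of_subset_of_card_le (fun q hq => ?_) ?_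
  · obtain ⟨p, -, rfl⟩ := mem_image.mp hq
    have := sdist_farthestPair hT p
    simp only [mem_filter, mem_univ, true_and]
    exact fun hdiag => by rw [sdist_eq_zero_of_isDiag hdiag] at this; omega
  · rw [card_image_of_injective _ (farthestPair_injective hT), card_univ, hT.card_sym2_edgeSet,
      ← Fintype.card_subtype, Sym2.card_subtype_not_diag]

theorem IsTree.wienerIndex_eq_edgeWienerIndex_add (hT : T.IsTree) :
    wienerIndex T = edgeWienerIndex T + (Fintype.card V).choose 2 := by
  calc wienerIndex T = ∑ q ∈ univ.image T.farthestPair, sdist T q := by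
        refine (sum_subset (subset_univ _) fun q _ hq => sdist_eq_zero_of_isDiag ?_).symm
        simpa [hT.image_farthestPair] using hq
    _ = ∑ p, (sdist T.lineGraph p + 1) := by
        rw [sum_image fun p _ p' _ h => farthestPair_injective hT h]
        exact sum_congr rfl fun p _ => sdist_farthestPair hT p
    _ = edgeWienerIndex T + (Fintype.card V).choose 2 := by
        rw [sum_add_distrib, sum_const, card_univ, hT.card_sym2_edgeSet, smul_eq_mul, mul_one]
        rfl

end SimpleGraph

/-- For a finite tree `T` on `n` vertices,
`W_e(T) = W(T) - n(n-1)/2`. -/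
theorem stmt7 {V : Type*} [Fintype V] [DecidableEq V] (T : SimpleGraph V)
    [DecidableRel T.Adj] (hT : T.IsTree) :
    (edgeWienerIndex T : ℝ) =
      (wienerIndex T : ℝ) - (Fintype.card V : ℝ) * (Fintype.card V - 1) / 2 := by
  rw [hT.wienerIndex_eq_edgeWienerIndex_add, Nat.cast_add, Nat.cast_choose_two]
  ring
end
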